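/- Let p_d(T) and p_{d_I}(T) be the 1D absorption probabilities erfc(d/(2√(DT))) and erfc(d_I/(2√(DT))) with 0 < d < d_I. Then for every T > 0, p_d(T) > p_{d_I}(T), and the ratio p_{d_I}(T)/p_d(T) is strictly increasing in T with limit 1 as T → ∞. -/

import Mathlib

/-! Put `s = 1 / (2 √(D T))`, which decreases from `∞` to `0` as `T` runs over `(0, ∞)`; the ratio
is then `erfc (d_I s) / erfc (d s)`. Since `erfc' x = -(2 / √π) e^{-x²}`, the logarithmic derivative
of this ratio in `s` is `(2 / (√π s)) (h (d s) - h (d_I s))` with `h x = x e^{-x²} / erfc x`, and `h`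
is increasing on `(0, ∞)` by Mills' inequality `2 x erfc x ≤ (2 / √π) e^{-x²}`. As `T → ∞`, `s → 0`
and both values of `erfc` tend to `erfc 0 = 1`. -/

open Filter Topology

noncomputable def erf (x : ℝ) : ℝ := (2 / Real.sqrt Real.pi) * ∫ t in (0:ℝ)..x, Real.exp (-t ^ 2)

noncomputable def erfc (x : ℝ) : ℝ := 1 - erf x

open Real MeasureTheory Set

lemma integrable_exp_neg_sq : Integrable fun t : ℝ => exp (-t ^ 2) := by
  simpa using integrable_exp_neg_mul_sq one_pos

lemma integral_Ioi_mul_exp_neg_sq (x : ℝ) :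
    ∫ t in Ioi x, t * exp (-t ^ 2) = exp (-x ^ 2) / 2 := by
  have hderiv : ∀ t ∈ Ici x, HasDerivAt (fun t : ℝ => -exp (-t ^ 2) / 2) (t * exp (-t ^ 2)) t :=
    fun t _ => ((hasDerivAt_pow 2 t).neg.exp.neg.div_const 2).congr_deriv
      (by simp only [Pi.neg_apply]; ring)
  have hint : IntegrableOn (fun t : ℝ => t * exp (-t ^ 2)) (Ioi x) := by
    simpa using (integrable_mul_exp_neg_mul_sq one_pos).integrableOn
  have hlim : Tendsto (fun t : ℝ => -exp (-t ^ 2) / 2) atTop (𝓝 0) := by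
    simpa using ((tendsto_exp_atBot.comp
      (tendsto_neg_atTop_atBot.comp (tendsto_pow_atTop two_ne_zero))).neg).div_const 2
  rw [integral_Ioi_of_hasDerivAt_of_tendsto' hderiv hint hlim]
  ring

lemma integral_Ioi_exp_neg_sq_le {x : ℝ} (hx : 0 < x) :
    ∫ t in Ioi x, exp (-t ^ 2) ≤ exp (-x ^ 2) / (2 * x) := by
  have hint : IntegrableOn (fun t : ℝ => x⁻¹ * (t * exp (-t ^ 2))) (Ioi x) := by
    simpa using ((integrable_mul_exp_neg_mul_sq one_pos).const_mul x⁻¹).integrableOn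
  calc ∫ t in Ioi x, exp (-t ^ 2)
      ≤ ∫ t in Ioi x, x⁻¹ * (t * exp (-t ^ 2)) := by
        refine setIntegral_mono_on integrable_exp_neg_sq.integrableOn hint measurableSet_Ioi ?_
        intro t ht
        have h1 : 1 ≤ x⁻¹ * t := by rw [← div_eq_inv_mul, one_le_div hx]; exact le_of_lt ht
        nlinarith [exp_pos (-t ^ 2)]
    _ = exp (-x ^ 2) / (2 * x) := by
        rw [integral_const_mul, integral_Ioi_mul_exp_neg_sq]
        field_simp

lemma erfc_eq_integral_Ioi (x : ℝ) : erfc x = 2 / √π * ∫ t in Ioi x, exp (-t ^ 2) := by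
  have hsplit := intervalIntegral.integral_interval_add_Ioi (a := 0) (b := x)
    integrable_exp_neg_sq.integrableOn integrable_exp_neg_sq.integrableOn
  have hhalf : ∫ t in Ioi (0 : ℝ), exp (-t ^ 2) = √π / 2 := by
    simpa using integral_gaussian_Ioi 1
  have hπ : √π ≠ 0 := (sqrt_pos.2 pi_pos).ne'
  rw [erfc, erf, eq_sub_of_add_eq (hsplit.trans hhalf)]
  field_simp
  ring

lemma erfc_pos (x : ℝ) : 0 < erfc x := by
  have : NeZero (volume (Ioi x)) := ⟨by simp⟩
  rw [erfc_eq_integral_Ioi]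
  have := integral_exp_pos (μ := volume.restrict (Ioi x)) integrable_exp_neg_sq.integrableOn
  positivity

lemma hasDerivAt_erfc (x : ℝ) : HasDerivAt erfc (-(2 / √π * exp (-x ^ 2))) x :=
  (((continuous_pow 2).neg.rexp.integral_hasStrictDerivAt 0 x).hasDerivAt.const_mul _).const_sub 1

lemma erfc_strictAnti : StrictAnti erfc :=
  strictAnti_of_hasDerivAt_neg hasDerivAt_erfc fun _ => neg_neg_of_pos (by positivity)

lemma erfc_zero : erfc 0 = 1 := by
  simp [erfc, erf]

/-- Mills' ratio inequality. -/
lemma two_mul_mul_erfc_le {x : ℝ} (hx : 0 < x) :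
    2 * x * erfc x ≤ 2 / √π * exp (-x ^ 2) := by
  rw [erfc_eq_integral_Ioi]
  calc 2 * x * (2 / √π * ∫ t in Ioi x, exp (-t ^ 2))
      ≤ 2 * x * (2 / √π * (exp (-x ^ 2) / (2 * x))) := by
        gcongr; exact integral_Ioi_exp_neg_sq_le hx
    _ = 2 / √π * exp (-x ^ 2) := by field_simp

lemma strictMonoOn_mul_exp_neg_sq_div_erfc :
    StrictMonoOn (fun x => x * exp (-x ^ 2) / erfc x) (Ioi 0) := by
  have hderiv : ∀ x, HasDerivAt (fun x => x * exp (-x ^ 2) / erfc x)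
      (((1 - 2 * x ^ 2) * exp (-x ^ 2) * erfc x - x * exp (-x ^ 2) * -(2 / √π * exp (-x ^ 2)))
        / erfc x ^ 2) x := by
    intro x
    have hg : HasDerivAt (fun x => x * exp (-x ^ 2)) ((1 - 2 * x ^ 2) * exp (-x ^ 2)) x :=
      ((hasDerivAt_id x).mul (hasDerivAt_pow 2 x).neg.exp).congr_deriv
        (by simp only [Pi.neg_apply, id_eq, Nat.cast_ofNat]; ring)
    exact hg.div (hasDerivAt_erfc x) (erfc_pos x).ne'
  refine strictMonoOn_of_deriv_pos (convex_Ioi 0)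
    (fun x _ => (hderiv x).continuousAt.continuousWithinAt) fun x hx => ?_
  rw [interior_Ioi] at hx
  rw [(hderiv x).deriv]
  have hmills := mul_le_mul_of_nonneg_left (two_mul_mul_erfc_le hx) hx.le
  have he := exp_pos (-x ^ 2)
  have hE := erfc_pos x
  -- by Mills, the numerator is at least `exp (-x ^ 2) * erfc x`
  apply div_pos _ (by positivity)
  nlinarith [mul_pos he hE, mul_le_mul_of_nonneg_left hmills he.le]

/-- The derivative of the quotient has the sign of `E (b s) - E (a s)`, where `E x = x f' x / f x`
is the elasticity of `f`. -/
lemma strictAntiOn_div_comp_mul {f f' : ℝ → ℝ} (hf : ∀ x, 0 < x → HasDerivAt f (f' x) x)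
    (hpos : ∀ x, 0 < x → 0 < f x) (hE : StrictAntiOn (fun x => x * f' x / f x) (Ioi 0))
    {a b : ℝ} (ha : 0 < a) (hab : a < b) :
    StrictAntiOn (fun s => f (b * s) / f (a * s)) (Ioi 0) := by
  have hb := ha.trans hab
  have hcomp : ∀ c, 0 < c → ∀ s, 0 < s → HasDerivAt (fun s => f (c * s)) (f' (c * s) * c) s :=
    fun c hc s hs => by
      simpa [Function.comp_def] using (hf _ (mul_pos hc hs)).comp s ((hasDerivAt_id s).const_mul c)
  have hderiv : ∀ s, 0 < s → HasDerivAt (fun s => f (b * s) / f (a * s))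
      ((f' (b * s) * b * f (a * s) - f (b * s) * (f' (a * s) * a)) / f (a * s) ^ 2) s :=
    fun s hs => (hcomp b hb s hs).div (hcomp a ha s hs) (hpos _ (mul_pos ha hs)).ne'
  refine strictAntiOn_of_deriv_neg (convex_Ioi 0)
    (fun s hs => (hderiv s hs).continuousAt.continuousWithinAt) fun s hs => ?_
  rw [interior_Ioi] at hs
  rw [(hderiv s hs).deriv]
  have hfa := hpos _ (mul_pos ha hs)
  have hfb := hpos _ (mul_pos hb hs)
  have key := hE (mul_pos ha hs) (mul_pos hb hs) (mul_lt_mul_of_pos_right hab hs)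
  rw [div_lt_div_iff₀ hfb hfa] at key
  refine div_neg_of_neg_of_pos (neg_of_mul_neg_right (a := s) ?_ hs.le) (by positivity)
  linarith

lemma strictAntiOn_erfc_mul_div_erfc_mul {a b : ℝ} (ha : 0 < a) (hab : a < b) :
    StrictAntiOn (fun s => erfc (b * s) / erfc (a * s)) (Ioi 0) := by
  refine strictAntiOn_div_comp_mul (fun x _ => hasDerivAt_erfc x) (fun x _ => erfc_pos x)
    (fun x hx y hy hxy => ?_) ha hab
  have h := strictMonoOn_mul_exp_neg_sq_div_erfc hx hy hxy
  have hc : 0 < 2 / √π := by positivity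
  calc y * -(2 / √π * exp (-y ^ 2)) / erfc y = -(2 / √π) * (y * exp (-y ^ 2) / erfc y) := by ring
    _ < -(2 / √π) * (x * exp (-x ^ 2) / erfc x) := mul_lt_mul_of_neg_left h (neg_neg_of_pos hc)
    _ = x * -(2 / √π * exp (-x ^ 2)) / erfc x := by ring

theorem stmt_15 (d dI D : ℝ) (hd : 0 < d) (hddI : d < dI) (hD : 0 < D) :
    (∀ T > (0:ℝ), erfc (d / (2 * Real.sqrt (D * T))) > erfc (dI / (2 * Real.sqrt (D * T)))) ∧
    StrictMonoOn (fun T : ℝ =>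
      erfc (dI / (2 * Real.sqrt (D * T))) / erfc (d / (2 * Real.sqrt (D * T)))) (Set.Ioi 0) ∧
    Tendsto (fun T : ℝ =>
      erfc (dI / (2 * Real.sqrt (D * T))) / erfc (d / (2 * Real.sqrt (D * T)))) atTop (𝓝 1) := by
  set scale : ℝ → ℝ := fun T => (2 * √(D * T))⁻¹
  have hscale_pos : MapsTo scale (Ioi 0) (Ioi 0) := fun T hT => by
    have hDT : 0 < D * T := mul_pos hD hT
    simp only [scale, mem_Ioi]; positivity
  have hscale_anti : StrictAntiOn scale (Ioi 0) := fun T₁ hT₁ T₂ _ hT => by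
    have hDT₁ : 0 < D * T₁ := mul_pos hD hT₁
    have : √(D * T₁) < √(D * T₂) := sqrt_lt_sqrt hDT₁.le (by gcongr)
    simp only [scale]; gcongr
  have hscale_lim : Tendsto scale atTop (𝓝 0) :=
    tendsto_inv_atTop_zero.comp <| (tendsto_sqrt_atTop.comp <|
      tendsto_id.const_mul_atTop hD).const_mul_atTop two_pos
  have hratio : (fun T => erfc (dI / (2 * √(D * T))) / erfc (d / (2 * √(D * T)))) =
      (fun s => erfc (dI * s) / erfc (d * s)) ∘ scale := by
    funext T; simp only [Function.comp, scale, div_eq_mul_inv]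
  refine ⟨fun T hT => erfc_strictAnti ?_, ?_, ?_⟩
  · exact div_lt_div_of_pos_right hddI (inv_pos.1 (hscale_pos hT))
  · rw [hratio]
    exact (strictAntiOn_erfc_mul_div_erfc_mul hd hddI).comp hscale_anti hscale_pos
  · rw [hratio]
    have hcont : ContinuousAt (fun s => erfc (dI * s) / erfc (d * s)) 0 :=
      ((hasDerivAt_erfc _).continuousAt.comp (continuous_const_mul dI).continuousAt).div
        ((hasDerivAt_erfc _).continuousAt.comp (continuous_const_mul d).continuousAt)
        (erfc_pos _).ne'
    simpa [erfc_zero] using hcont.tendsto.comp hscale_lim
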